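/- arXiv:1701.01503 — 2 statements merged into one kernel-verified Lean document; each statement's English description precedes it below -/
import Mathlib

section
/- Asymptotic for the exponentiated digamma: exp(ψ'(c)) = c − 1/2 + O(1/c) as c → ∞, where ψ' is the digamma function. Equivalently, c·(exp(ψ'(c)) − c + 1/2) is bounded as c → ∞. -/
/-!
The midpoint and trapezoid bounds for `∫ₐ^{a+1} dt / t = log (a + 1) - log a`, read off from
the power series of `log (1 + a⁻¹)`, show that `ψ x - log (x - 1/2)` decreases and
`ψ x - log x + (2x)⁻¹` increases under `x ↦ x + 1`, since `ψ (x + 1) = ψ x + x⁻¹`. Both tend to `0` because convexity of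
`log ∘ Γ` squeezes `ψ x` between `log x - x⁻¹` and `log x`. Hence
`log (x - 1/2) ≤ ψ x ≤ log x - (2x)⁻¹`, and exponentiating gives
`0 ≤ exp (ψ x) - (x - 1/2) ≤ (4x)⁻¹`.
-/

open Real Filter Asymptotics Set Topology

local notation "ψ" => deriv fun t : ℝ => Real.log (Real.Gamma t)

theorem nonneg_of_apply_add_one_le_of_tendsto {h : ℝ → ℝ} {x : ℝ}
    (hstep : ∀ y, x ≤ y → h (y + 1) ≤ h y) (hlim : Tendsto h atTop (𝓝 0)) : 0 ≤ h x := by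
  have hanti : Antitone fun n : ℕ => h (x + n) := antitone_nat_of_succ_le fun n => by
    simpa [add_assoc] using hstep (x + n) (by simp)
  have hseq : Tendsto (fun n : ℕ => h (x + n)) atTop (𝓝 0) :=
    hlim.comp (tendsto_atTop_add_const_left _ x tendsto_natCast_atTop_atTop)
  simpa using hanti.le_of_tendsto hseq 0

namespace Real

theorem log_one_add_inv {a : ℝ} (ha : 0 < a) : log (1 + a⁻¹) = log (a + 1) - log a := by
  rw [← log_div (by positivity) ha.ne', add_div, div_self ha.ne', one_div]

theorem inv_add_half_le_log_add_one_sub_log {a : ℝ} (ha : 0 < a) :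
    (a + 1 / 2)⁻¹ ≤ log (a + 1) - log a := by
  rw [← log_one_add_inv ha]
  have h := le_hasSum (hasSum_log_one_add_inv ha) 0 fun k _ => by positivity
  refine le_trans (le_of_eq ?_) h
  norm_num
  rw [show a + 1 / 2 = (2 * a + 1) / 2 by ring, inv_div]
  ring

theorem log_add_one_sub_log_le_inv_add_inv_div_two {a : ℝ} (ha : 0 < a) :
    log (a + 1) - log a ≤ (a⁻¹ + (a + 1)⁻¹) / 2 := by
  rw [← log_one_add_inv ha]
  set t : ℝ := 1 / (2 * a + 1)
  have ht0 : 0 ≤ t := by positivity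
  have ht1 : t < 1 := by rw [div_lt_one (by linarith)]; linarith
  have hgeom : HasSum (fun k : ℕ => 2 * t * (t ^ 2) ^ k) (2 * t * (1 - t ^ 2)⁻¹) :=
    (hasSum_geometric_of_lt_one (by positivity) (by nlinarith)).mul_left (2 * t)
  have hle := hasSum_le (fun k => ?_) (hasSum_log_one_add_inv ha) hgeom
  · refine hle.trans_eq ?_
    have h2a : 2 * a + 1 ≠ 0 := by positivity
    have ha1 : a + 1 ≠ 0 := by positivity
    have h1t : 1 - t ^ 2 = 4 * a * (a + 1) / (2 * a + 1) ^ 2 := by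
      simp only [t]
      field_simp
      ring
    rw [h1t]
    simp only [t]
    field_simp
    ring
  · have hk : 1 / (2 * (k : ℝ) + 1) ≤ 1 := by rw [div_le_one (by positivity)]; linarith
    calc 2 * (1 / (2 * (k : ℝ) + 1)) * t ^ (2 * k + 1)
        ≤ 2 * 1 * t ^ (2 * k + 1) := by gcongr
      _ = 2 * t * (t ^ 2) ^ k := by ring

theorem differentiableAt_log_Gamma {x : ℝ} (hx : 0 < x) :
    DifferentiableAt ℝ (fun t => log (Gamma t)) x :=
  (differentiableAt_Gamma fun m => by linarith).log (Gamma_pos_of_pos hx).ne'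

theorem log_Gamma_add_one {x : ℝ} (hx : 0 < x) :
    log (Gamma (x + 1)) = log (Gamma x) + log x := by
  rw [Gamma_add_one hx.ne', log_mul hx.ne' (Gamma_pos_of_pos hx).ne', add_comm]

theorem digamma_add_one {x : ℝ} (hx : 0 < x) : ψ (x + 1) = ψ x + x⁻¹ := by
  rw [← deriv_comp_add_const, ← deriv_log,
    ← deriv_add (differentiableAt_log_Gamma hx) (differentiableAt_log hx.ne')]
  refine EventuallyEq.deriv_eq ?_
  filter_upwards [eventually_gt_nhds hx] with y hy using log_Gamma_add_one hy

theorem convexOn_log_Gamma' : ConvexOn ℝ (Ioi 0) fun t => log (Gamma t) :=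
  convexOn_log_Gamma

theorem digamma_le_log {x : ℝ} (hx : 0 < x) : ψ x ≤ log x := by
  have h := convexOn_log_Gamma'.deriv_le_slope hx (show (0 : ℝ) < x + 1 by linarith)
    (by linarith) (differentiableAt_log_Gamma hx)
  rwa [slope_def_field, add_sub_cancel_left, div_one, log_Gamma_add_one hx,
    add_sub_cancel_left] at h

theorem log_sub_inv_le_digamma {x : ℝ} (hx : 0 < x) : log x - x⁻¹ ≤ ψ x := by
  have hx1 : (0 : ℝ) < x + 1 := by linarith
  have h := convexOn_log_Gamma'.slope_le_deriv hx hx1 (by linarith)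
    (differentiableAt_log_Gamma hx1)
  rw [slope_def_field, add_sub_cancel_left, div_one, log_Gamma_add_one hx,
    add_sub_cancel_left, digamma_add_one hx] at h
  linarith

theorem tendsto_digamma_sub_log : Tendsto (fun x => ψ x - log x) atTop (𝓝 0) := by
  have hlow : Tendsto (fun x : ℝ => -x⁻¹) atTop (𝓝 0) := by
    simpa using (tendsto_inv_atTop_zero (𝕜 := ℝ)).neg
  refine tendsto_of_tendsto_of_tendsto_of_le_of_le' hlow tendsto_const_nhds ?_ ?_
  all_goals filter_upwards [eventually_gt_atTop 0] with x hx
  · linarith [log_sub_inv_le_digamma hx]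
  · linarith [digamma_le_log hx]

theorem log_sub_half_le_digamma {x : ℝ} (hx : 1 / 2 < x) : log (x - 1 / 2) ≤ ψ x := by
  suffices 0 ≤ ψ x - log (x - 1 / 2) by linarith
  refine nonneg_of_apply_add_one_le_of_tendsto (h := fun y => ψ y - log (y - 1 / 2))
    (fun y hy => ?_) ?_
  · have hy0 : 0 < y - 1 / 2 := by linarith
    have hmid := inv_add_half_le_log_add_one_sub_log hy0
    rw [sub_add_cancel, sub_add_eq_add_sub] at hmid
    rw [digamma_add_one (by linarith)]
    linarith
  · have h := tendsto_digamma_sub_log.sub (tendsto_log_comp_add_sub_log (-1 / 2))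
    simpa [sub_eq_add_neg, neg_div] using h

theorem digamma_le_log_sub_inv_two_mul {x : ℝ} (hx : 0 < x) : ψ x ≤ log x - (2 * x)⁻¹ := by
  suffices 0 ≤ -(ψ x - log x + (2 * x)⁻¹) by linarith
  refine nonneg_of_apply_add_one_le_of_tendsto
    (h := fun y => -(ψ y - log y + (2 * y)⁻¹)) (fun y hy => ?_) ?_
  · have hy0 : 0 < y := by linarith
    have htrap := log_add_one_sub_log_le_inv_add_inv_div_two hy0
    rw [digamma_add_one hy0, mul_inv, mul_inv]
    linarith
  · have h := (tendsto_digamma_sub_log.add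
      (tendsto_inv_atTop_zero.comp (tendsto_id.const_mul_atTop two_pos))).neg
    simpa using h

theorem exp_digamma_sub_mem_Icc {x : ℝ} (hx : 1 / 2 < x) :
    exp (ψ x) - (x - 1 / 2) ∈ Icc 0 (4 * x)⁻¹ := by
  have hx0 : 0 < x := by linarith
  have hlow : x - 1 / 2 ≤ exp (ψ x) := calc
    x - 1 / 2 = exp (log (x - 1 / 2)) := (exp_log (by linarith)).symm
    _ ≤ exp (ψ x) := exp_le_exp.mpr (log_sub_half_le_digamma hx)
  have hexp : exp (-(2 * x)⁻¹) ≤ (1 + (2 * x)⁻¹)⁻¹ := by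
    rw [exp_neg]
    exact inv_anti₀ (by positivity) (by linarith [add_one_le_exp (2 * x)⁻¹])
  have hup : exp (ψ x) ≤ x * (1 + (2 * x)⁻¹)⁻¹ := calc
    exp (ψ x) ≤ exp (log x - (2 * x)⁻¹) := exp_le_exp.mpr (digamma_le_log_sub_inv_two_mul hx0)
    _ = x * exp (-(2 * x)⁻¹) := by rw [sub_eq_add_neg, exp_add, exp_log hx0]
    _ ≤ x * (1 + (2 * x)⁻¹)⁻¹ := by gcongr
  refine ⟨by linarith, ?_⟩
  have hrat : x * (1 + (2 * x)⁻¹)⁻¹ - (x - 1 / 2) ≤ (4 * x)⁻¹ := by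
    rw [show x * (1 + (2 * x)⁻¹)⁻¹ - (x - 1 / 2) = (2 * (2 * x + 1))⁻¹ by field_simp; ring]
    exact inv_anti₀ (by positivity) (by linarith)
  linarith

end Real

/-- Asymptotic for the exponentiated digamma:
exp(ψ'(c)) = c - 1/2 + O(1/c) as c → ∞. -/
theorem exp_digamma_asymptotic :
    (fun c : ℝ =>
        Real.exp (deriv (fun t => Real.log (Real.Gamma t)) c) - (c - 1/2))
      =O[atTop] fun c : ℝ => 1 / c := by
  refine IsBigO.of_bound (1 / 4) ?_
  filter_upwards [eventually_gt_atTop (1 / 2 : ℝ)] with c hc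
  obtain ⟨hlow, hup⟩ := exp_digamma_sub_mem_Icc hc
  have hc0 : 0 < c := by linarith
  rw [norm_of_nonneg hlow, norm_of_nonneg (by positivity)]
  calc _ ≤ (4 * c)⁻¹ := hup
    _ = 1 / 4 * (1 / c) := by field_simp
end

section
/- Conjugacy of the P_λ mixture prior: let r ≥ 0 be real and s > 0, and let the prior density be p(λ) ∝ (1/2)λ^{-c-1} e^{-d/λ} / Z(c,0,2d) + (1/2)λ^{c-1} e^{-dλ} / Z(c,0,2d) with Z(c,0,2d) = Γ(c)/d^c. Then the posterior density proportional to λ^r e^{-sλ} p(λ) is the mixture π · GIG(−c+r, 2d, 2s) + (1−π) · GIG(c+r, 0, 2(d+s)) with mixture weight π = Z(−c+r, 2d, 2s) / (Z(−c+r, 2d, 2s) + Z(c+r, 0, 2(d+s))), where Z(η, χ, ψ) = ∫₀^∞ λ^{η−1} exp(−(χ/λ + ψλ)/2) dλ; in particular the marginal likelihood equals (Z(−c+r, 2d, 2s) + Z(c+r, 0, 2(d+s)))/(2Z(c,0,2d)). -/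
open MeasureTheory Real

/-- GIG normalizing constant Z(η, χ, ψ) = ∫₀^∞ λ^{η-1} exp(-(χ/λ + ψλ)/2) dλ. -/
noncomputable def Znorm (η χ ψ : ℝ) : ℝ :=
  ∫ l in Set.Ioi (0:ℝ), l ^ (η - 1) * Real.exp (-(χ / l + ψ * l) / 2)

/-- GIG density with parameters (η, χ, ψ). -/
noncomputable def gigPdf (η χ ψ : ℝ) (l : ℝ) : ℝ :=
  l ^ (η - 1) * Real.exp (-(χ / l + ψ * l) / 2) / Znorm η χ ψ

/-!
Multiplying a GIG kernel `λ^{η-1} exp(-(χ/λ + ψλ)/2)` by the likelihood `λ^r e^{-sλ}` gives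
the GIG kernel with parameters `(η + r, χ, ψ + 2s)`. The two components of the prior are the
GIG kernels `(-c, 2d, 0)` and `(c, 0, 2d)`, so the unnormalised posterior is the sum of the
kernels `(-c + r, 2d, 2s)` and `(c + r, 0, 2(d + s))` divided by `2 Z(c, 0, 2d)`. Both kernels
are integrable with positive integral (near `0` the factor `e^{-χ/(2λ)}` beats any power of `λ`
when `χ > 0`), so integrating gives the marginal likelihood and normalising gives the mixture.
-/

noncomputable def gigKernel (η χ ψ l : ℝ) : ℝ :=
  l ^ (η - 1) * exp (-(χ / l + ψ * l) / 2)

theorem Znorm_eq_integral_gigKernel (η χ ψ : ℝ) :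
    Znorm η χ ψ = ∫ l in Set.Ioi 0, gigKernel η χ ψ l :=
  rfl

theorem gigPdf_eq_gigKernel_div (η χ ψ l : ℝ) :
    gigPdf η χ ψ l = gigKernel η χ ψ l / Znorm η χ ψ :=
  rfl

theorem gigKernel_pos {η χ ψ l : ℝ} (hl : 0 < l) : 0 < gigKernel η χ ψ l := by
  unfold gigKernel; positivity

theorem measurable_gigKernel (η χ ψ : ℝ) : Measurable (gigKernel η χ ψ) := by
  unfold gigKernel; fun_prop

theorem rpow_mul_exp_mul_gigKernel {η χ ψ l : ℝ} (r s : ℝ) (hl : 0 < l) :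
    l ^ r * exp (-(s * l)) * gigKernel η χ ψ l = gigKernel (η + r) χ (ψ + 2 * s) l := by
  unfold gigKernel
  rw [show η + r - 1 = r + (η - 1) by ring, rpow_add hl, mul_mul_mul_comm, ← exp_add]
  congr 2
  ring

theorem gigKernel_psi_zero (η χ l : ℝ) :
    gigKernel η χ 0 l = l ^ (η - 1) * exp (-(χ / 2) / l) := by
  unfold gigKernel
  congr 2
  ring

theorem gigKernel_chi_zero (η ψ l : ℝ) :
    gigKernel η 0 ψ l = l ^ (η - 1) * exp (-(ψ / 2) * l) := by
  unfold gigKernel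
  congr 2
  ring

theorem integrableOn_gigKernel_chi_zero {η ψ : ℝ} (hη : 0 < η) (hψ : 0 < ψ) :
    IntegrableOn (gigKernel η 0 ψ) (Set.Ioi 0) := by
  refine (integrableOn_rpow_mul_exp_neg_mul_rpow (s := η - 1) (by linarith) one_pos
    (half_pos hψ)).congr_fun (fun l _ => ?_) measurableSet_Ioi
  simp only [gigKernel_chi_zero, rpow_one]

theorem exp_neg_le_factorial_div_pow {y : ℝ} (hy : 0 < y) (n : ℕ) :
    exp (-y) ≤ n.factorial / y ^ n := by
  rw [exp_neg, ← one_div, div_le_div_iff₀ (exp_pos y) (by positivity), one_mul,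
    ← div_le_iff₀' (by positivity)]
  exact pow_div_factorial_le_exp _ hy.le n

theorem integrableOn_gigKernel {η χ ψ : ℝ} (hχ : 0 < χ) (hψ : 0 < ψ) :
    IntegrableOn (gigKernel η χ ψ) (Set.Ioi 0) := by
  obtain ⟨n, hn⟩ := exists_nat_gt (-η)
  have hdom := (integrableOn_gigKernel_chi_zero (η := η + n) (by linarith) hψ).const_mul
    (n.factorial * (2 / χ) ^ n)
  refine hdom.mono' (measurable_gigKernel η χ ψ).aestronglyMeasurable ?_
  filter_upwards [ae_restrict_mem measurableSet_Ioi] with l (hl : 0 < l)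
  rw [norm_of_nonneg (gigKernel_pos hl).le, gigKernel_chi_zero]
  have hsplit :
      gigKernel η χ ψ l = l ^ (η - 1) * exp (-(χ / (2 * l))) * exp (-(ψ / 2) * l) := by
    rw [gigKernel, mul_assoc, ← exp_add]
    congr 2
    field_simp
    ring
  have hbound : exp (-(χ / (2 * l))) ≤ n.factorial * (2 / χ) ^ n * l ^ n := by
    refine (exp_neg_le_factorial_div_pow (by positivity) n).trans_eq ?_
    rw [div_pow, div_pow, mul_pow]
    field_simp
  calc gigKernel η χ ψ l
      ≤ l ^ (η - 1) * (n.factorial * (2 / χ) ^ n * l ^ n) * exp (-(ψ / 2) * l) := by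
        rw [hsplit]; gcongr
    _ = n.factorial * (2 / χ) ^ n * (l ^ (η + n - 1) * exp (-(ψ / 2) * l)) := by
        rw [show η + n - 1 = (η - 1) + n by ring, rpow_add hl, rpow_natCast]; ring

theorem Znorm_pos {η χ ψ : ℝ} (h : IntegrableOn (gigKernel η χ ψ) (Set.Ioi 0)) :
    0 < Znorm η χ ψ := by
  rw [Znorm_eq_integral_gigKernel, setIntegral_pos_iff_support_of_nonneg_ae
    (ae_restrict_of_forall_mem measurableSet_Ioi fun l hl => (gigKernel_pos hl).le) h]
  have : Set.Ioi (0 : ℝ) ⊆ Function.support (gigKernel η χ ψ) :=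
    fun l hl => (gigKernel_pos hl).ne'
  simp [Set.inter_eq_right.mpr this]

/-- Conjugacy of the P_λ mixture prior to the Poisson-type likelihood
λ^r e^{-sλ}: the posterior is a two-component GIG mixture with weight
π = Z(-c+r, 2d, 2s)/(Z(-c+r, 2d, 2s) + Z(c+r, 0, 2(d+s))), and the marginal
likelihood is (Z(-c+r, 2d, 2s) + Z(c+r, 0, 2(d+s)))/(2 Z(c, 0, 2d)). -/
theorem plambda_conjugacy (c d r s : ℝ) (hc : 0 < c) (hd : 0 < d)
    (hr : 0 ≤ r) (hs : 0 < s)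
    (p : ℝ → ℝ)
    (hp : ∀ l : ℝ, p l =
      (1/2) * (l ^ (-c - 1) * Real.exp (-(d / l))) / Znorm c 0 (2 * d)
        + (1/2) * (l ^ (c - 1) * Real.exp (-(d * l))) / Znorm c 0 (2 * d)) :
    (∀ l : ℝ, 0 < l →
      l ^ r * Real.exp (-(s * l)) * p l =
        ((Znorm (-c + r) (2 * d) (2 * s) + Znorm (c + r) 0 (2 * (d + s)))
            / (2 * Znorm c 0 (2 * d))) *
          ((Znorm (-c + r) (2 * d) (2 * s)
              / (Znorm (-c + r) (2 * d) (2 * s) + Znorm (c + r) 0 (2 * (d + s)))) *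
              gigPdf (-c + r) (2 * d) (2 * s) l
            + (Znorm (c + r) 0 (2 * (d + s))
              / (Znorm (-c + r) (2 * d) (2 * s) + Znorm (c + r) 0 (2 * (d + s)))) *
              gigPdf (c + r) 0 (2 * (d + s)) l)) ∧
    (∫ l in Set.Ioi (0:ℝ), l ^ r * Real.exp (-(s * l)) * p l)
      = (Znorm (-c + r) (2 * d) (2 * s) + Znorm (c + r) 0 (2 * (d + s)))
          / (2 * Znorm c 0 (2 * d)) := by
  have hprior (l : ℝ) :
      p l = (gigKernel (-c) (2 * d) 0 l + gigKernel c 0 (2 * d) l) / (2 * Znorm c 0 (2 * d)) := by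
    rw [hp, gigKernel_psi_zero, gigKernel_chi_zero]
    ring_nf
  have hpost (l : ℝ) (hl : 0 < l) : l ^ r * exp (-(s * l)) * p l =
      (gigKernel (-c + r) (2 * d) (2 * s) l + gigKernel (c + r) 0 (2 * (d + s)) l)
        / (2 * Znorm c 0 (2 * d)) := by
    rw [hprior, ← mul_div_assoc, mul_add, rpow_mul_exp_mul_gigKernel r s hl,
      rpow_mul_exp_mul_gigKernel r s hl, zero_add, ← mul_add]
  have hint₁ : IntegrableOn (gigKernel (-c + r) (2 * d) (2 * s)) (Set.Ioi 0) :=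
    integrableOn_gigKernel (by positivity) (by positivity)
  have hint₂ : IntegrableOn (gigKernel (c + r) 0 (2 * (d + s))) (Set.Ioi 0) :=
    integrableOn_gigKernel_chi_zero (by positivity) (by positivity)
  have hZ₁ := Znorm_pos hint₁
  have hZ₂ := Znorm_pos hint₂
  refine ⟨fun l hl => ?_, ?_⟩
  · rw [hpost l hl, gigPdf_eq_gigKernel_div, gigPdf_eq_gigKernel_div]
    field_simp
  · rw [setIntegral_congr_fun measurableSet_Ioi hpost, integral_div, integral_add hint₁ hint₂,
      ← Znorm_eq_integral_gigKernel, ← Znorm_eq_integral_gigKernel]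
end
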